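/- arXiv:2112.12542 — 4 statements merged into one kernel-verified Lean document; each statement's English description precedes it below -/
import Mathlib

section
/- The SumDiversity measure violates right-hand subadditivity: for four distinct points x₁,x₂,x₃,x₄ in a metric space with all inter-set distances d(x₁,x₃), d(x₁,x₄), d(x₂,x₃), d(x₂,x₄) strictly greater than both d(x₁,x₂) and d(x₃,x₄), it holds that SumDiversity({x₁,x₂,x₃,x₄}) > SumDiversity({x₁,x₂}) + SumDiversity({x₃,x₄}). -/
/-- SumDiversity: `Σ_{x∈S} (1/(n-1)) Σ_{y∈S, y≠x} d(x,y)`; note the inner sum may range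
over all of `S` since `d(x,x) = 0`. -/
noncomputable def sumDiversity {U : Type*} [MetricSpace U] (S : Finset U) : ℝ :=
  ∑ x ∈ S, (∑ y ∈ S, dist x y) / ((S.card : ℝ) - 1)

theorem sumDiversity_violates_subadditivity {U : Type*} [MetricSpace U] [DecidableEq U]
    (x₁ x₂ x₃ x₄ : U)
    (h12 : x₁ ≠ x₂) (h13 : x₁ ≠ x₃) (h14 : x₁ ≠ x₄)
    (h23 : x₂ ≠ x₃) (h24 : x₂ ≠ x₄) (h34 : x₃ ≠ x₄)
    (h13d : max (dist x₁ x₂) (dist x₃ x₄) < dist x₁ x₃)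
    (h14d : max (dist x₁ x₂) (dist x₃ x₄) < dist x₁ x₄)
    (h23d : max (dist x₁ x₂) (dist x₃ x₄) < dist x₂ x₃)
    (h24d : max (dist x₁ x₂) (dist x₃ x₄) < dist x₂ x₄) :
    sumDiversity ({x₁, x₂} : Finset U) + sumDiversity ({x₃, x₄} : Finset U) <
      sumDiversity ({x₁, x₂, x₃, x₄} : Finset U) := by
  have hm1 := le_max_left (dist x₁ x₂) (dist x₃ x₄)
  have hm2 := le_max_right (dist x₁ x₂) (dist x₃ x₄)
  simp only [sumDiversity, Finset.sum_insert, Finset.mem_insert, Finset.mem_singleton,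
    Finset.sum_singleton, Finset.card_insert_of_notMem, Finset.card_singleton,
    not_or, h12, h13, h14, h23, h24, h34, and_true, not_false_iff,
    Finset.mem_singleton, dist_self, dist_comm x₂ x₁, dist_comm x₃ x₁, dist_comm x₄ x₁,
    dist_comm x₃ x₂, dist_comm x₄ x₂, dist_comm x₄ x₃]
  push_cast
  ring_nf
  linarith [max_lt_iff.mp h13d, max_lt_iff.mp h14d, max_lt_iff.mp h23d, max_lt_iff.mp h24d]
end

section
/- The SumDiameter measure violates right-hand subadditivity: for four distinct points x₁,x₂,x₃,x₄ in a metric space with all inter-set distances d(xᵢ,xⱼ) for i∈{1,2}, j∈{3,4} strictly greater than both d(x₁,x₂) and d(x₃,x₄), it holds that SumDiameter({x₁,x₂,x₃,x₄}) > SumDiameter({x₁,x₂}) + SumDiameter({x₃,x₄}). -/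
/-- SumDiameter: `Σ_{x∈S} max_{y∈S, y≠x} d(x,y)`. -/
noncomputable def sumDiameter {U : Type*} [MetricSpace U] (S : Finset U) : ℝ :=
  ∑ x ∈ S, sSup {r | ∃ y ∈ S, y ≠ x ∧ r = dist x y}

lemma distSet_finite {U : Type*} [MetricSpace U] (S : Finset U) (x : U) :
    ({r | ∃ y ∈ S, y ≠ x ∧ r = dist x y} : Set ℝ).Finite := by
  have h : {r | ∃ y ∈ S, y ≠ x ∧ r = dist x y} ⊆ (dist x) '' (↑S) := by
    rintro r ⟨y, hy, -, rfl⟩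
    exact ⟨y, hy, rfl⟩
  exact Set.Finite.subset (S.finite_toSet.image _) h

lemma le_distSet_sSup {U : Type*} [MetricSpace U] (S : Finset U) (x z : U)
    (hz : z ∈ S) (hzx : z ≠ x) :
    dist x z ≤ sSup {r | ∃ y ∈ S, y ≠ x ∧ r = dist x y} :=
  le_csSup (distSet_finite S x).bddAbove ⟨z, hz, hzx, rfl⟩

lemma pair_distSet {U : Type*} [MetricSpace U] [DecidableEq U] (a b : U) (hab : a ≠ b) :
    sSup {r | ∃ y ∈ ({a, b} : Finset U), y ≠ a ∧ r = dist a y} = dist a b := by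
  have : {r | ∃ y ∈ ({a, b} : Finset U), y ≠ a ∧ r = dist a y} = {dist a b} := by
    ext r
    simp only [Set.mem_setOf_eq, Finset.mem_insert, Finset.mem_singleton, Set.mem_singleton_iff]
    constructor
    · rintro ⟨y, hy | hy, hya, rfl⟩ <;> simp_all
    · rintro rfl; exact ⟨b, Or.inr rfl, hab.symm, rfl⟩
  rw [this, csSup_singleton]

lemma sumDiameter_pair {U : Type*} [MetricSpace U] [DecidableEq U] (a b : U) (hab : a ≠ b) :
    sumDiameter ({a, b} : Finset U) = 2 * dist a b := by
  rw [sumDiameter, Finset.sum_pair hab, pair_distSet a b hab]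
  have : ({a, b} : Finset U) = {b, a} := by
    ext; simp [or_comm]
  rw [this, pair_distSet b a hab.symm, dist_comm]
  ring

theorem sumDiameter_violates_subadditivity {U : Type*} [MetricSpace U] [DecidableEq U]
    (x₁ x₂ x₃ x₄ : U)
    (h12 : x₁ ≠ x₂) (h13 : x₁ ≠ x₃) (h14 : x₁ ≠ x₄)
    (h23 : x₂ ≠ x₃) (h24 : x₂ ≠ x₄) (h34 : x₃ ≠ x₄)
    (h13d : max (dist x₁ x₂) (dist x₃ x₄) < dist x₁ x₃)
    (h14d : max (dist x₁ x₂) (dist x₃ x₄) < dist x₁ x₄)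
    (h23d : max (dist x₁ x₂) (dist x₃ x₄) < dist x₂ x₃)
    (h24d : max (dist x₁ x₂) (dist x₃ x₄) < dist x₂ x₄) :
    sumDiameter ({x₁, x₂} : Finset U) + sumDiameter ({x₃, x₄} : Finset U) <
      sumDiameter ({x₁, x₂, x₃, x₄} : Finset U) := by
  rw [sumDiameter_pair x₁ x₂ h12, sumDiameter_pair x₃ x₄ h34]
  set S : Finset U := {x₁, x₂, x₃, x₄} with hS
  have m1 : x₁ ∈ S := by simp [hS]
  have m2 : x₂ ∈ S := by simp [hS]
  have m3 : x₃ ∈ S := by simp [hS]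
  have m4 : x₄ ∈ S := by simp [hS]
  have sum4 : sumDiameter S =
      sSup {r | ∃ y ∈ S, y ≠ x₁ ∧ r = dist x₁ y} +
      (sSup {r | ∃ y ∈ S, y ≠ x₂ ∧ r = dist x₂ y} +
      (sSup {r | ∃ y ∈ S, y ≠ x₃ ∧ r = dist x₃ y} +
      sSup {r | ∃ y ∈ S, y ≠ x₄ ∧ r = dist x₄ y})) := by
    rw [sumDiameter, hS]
    rw [Finset.sum_insert (by simp [h12, h13, h14]),
        Finset.sum_insert (by simp [h23, h24]),
        Finset.sum_pair h34]
  rw [sum4]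
  have t1 := le_distSet_sSup S x₁ x₃ m3 h13.symm
  have t2 := le_distSet_sSup S x₂ x₄ m4 h24.symm
  have t3 := le_distSet_sSup S x₃ x₁ m1 h13
  have t4 := le_distSet_sSup S x₄ x₂ m2 h24
  rw [dist_comm x₃ x₁] at t3
  rw [dist_comm x₄ x₂] at t4
  have a1 : dist x₁ x₂ ≤ max (dist x₁ x₂) (dist x₃ x₄) := le_max_left _ _
  have a2 : dist x₃ x₄ ≤ max (dist x₁ x₂) (dist x₃ x₄) := le_max_right _ _
  linarith
end

section
/- #Circles satisfies the dissimilarity axiom: for points x₁, x₂ with d(x₁,x₂) = a > 0, threshold t ≥ 0, a midpoint x* with d(x*,x₁)=d(x*,x₂)=a/2, and any x ∈ X(x₁,x₂), we have #Circles({x₁,x₂,x}) ≤ #Circles({x₁,x₂,x*}). -/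
open Classical in
/-- The #Circles measure: the maximum cardinality of a subset `C ⊆ S` all of whose
pairwise distances exceed the threshold `t`. -/
noncomputable def nCircles {U : Type*} [MetricSpace U] (t : ℝ) (S : Finset U) : ℕ :=
  (S.powerset.filter fun C => ∀ x ∈ C, ∀ y ∈ C, x ≠ y → t < dist x y).sup Finset.card

/-!
Write `a = d(x₁, x₂)`. Every pairwise distance in `{x₁, x₂, x}` is at most `a`, and `x` lies
within `a / 2` of `x₁` or of `x₂`, whereas `{x₁, x₂, x*}` has pairwise distances `a, a/2, a/2`.
Hence for `t < a / 2` the right side is `3`; for `a / 2 ≤ t < a` the left side is at most `2`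
and `{x₁, x₂}` shows the right side is at least `2`; for `a ≤ t` the left side is at most `1`.
-/

section nCircles

variable {U : Type*} [MetricSpace U] {t : ℝ} {S C : Finset U}

open Classical in
theorem le_nCircles (hCS : C ⊆ S) (hC : (C : Set U).Pairwise fun u v => t < dist u v) :
    C.card ≤ nCircles t S :=
  Finset.le_sup (f := Finset.card) (Finset.mem_filter.2 ⟨Finset.mem_powerset.2 hCS, hC⟩)

open Classical in
theorem exists_card_eq_nCircles :
    ∃ C ⊆ S, (C : Set U).Pairwise (fun u v => t < dist u v) ∧ C.card = nCircles t S := by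
  obtain ⟨C, hC, hsup⟩ := Finset.exists_mem_eq_sup
    (S.powerset.filter fun C => ∀ x ∈ C, ∀ y ∈ C, x ≠ y → t < dist x y)
    ⟨∅, by simp⟩ Finset.card
  rw [Finset.mem_filter, Finset.mem_powerset] at hC
  exact ⟨C, hC.1, hC.2, hsup.symm⟩

theorem nCircles_le_iff {n : ℕ} :
    nCircles t S ≤ n ↔
      ∀ C ⊆ S, (C : Set U).Pairwise (fun u v => t < dist u v) → C.card ≤ n := by
  refine ⟨fun h C hCS hC => (le_nCircles hCS hC).trans h, fun h => ?_⟩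
  obtain ⟨C, hCS, hC, hcard⟩ := exists_card_eq_nCircles (t := t) (S := S)
  exact hcard ▸ h C hCS hC

theorem nCircles_le_card : nCircles t S ≤ S.card :=
  nCircles_le_iff.2 fun _ hCS _ => Finset.card_le_card hCS

theorem nCircles_lt_card (hS : ¬(S : Set U).Pairwise fun u v => t < dist u v) :
    nCircles t S < S.card := by
  obtain ⟨C, hCS, hC, hcard⟩ := exists_card_eq_nCircles (t := t) (S := S)
  have hCS' : C ⊂ S := hCS.ssubset_of_ne fun h => hS (h ▸ hC)
  exact hcard ▸ Finset.card_lt_card hCS'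

theorem nCircles_le_one (hS : (S : Set U).Pairwise fun u v => dist u v ≤ t) :
    nCircles t S ≤ 1 :=
  nCircles_le_iff.2 fun C hCS hC => Finset.card_le_one.2 fun u hu v hv => by
    by_contra huv
    exact (hS (hCS hu) (hCS hv) huv).not_gt (hC hu hv huv)

end nCircles

section Betweenness

variable {U : Type*} [MetricSpace U] [DecidableEq U] {x₁ x₂ x : U}

theorem pairwise_dist_triple {P : ℝ → Prop} (h₁₂ : P (dist x₁ x₂)) (h₁ : P (dist x₁ x))
    (h₂ : P (dist x₂ x)) :
    (({x₁, x₂, x} : Finset U) : Set U).Pairwise fun u v => P (dist u v) := by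
  have : Std.Symm fun u v : U => P (dist u v) := ⟨fun u v h => by rwa [dist_comm]⟩
  simp only [Finset.coe_insert, Finset.coe_singleton, Set.pairwise_insert_of_symm,
    Set.pairwise_singleton, Set.mem_insert_iff, Set.mem_singleton_iff, forall_eq_or_imp, forall_eq]
  exact ⟨⟨trivial, fun _ => h₂⟩, fun _ => h₁₂, fun _ => h₁⟩

theorem pairwise_dist_le_of_dist_add_dist_eq (hx : dist x x₁ + dist x x₂ = dist x₁ x₂) :
    (({x₁, x₂, x} : Finset U) : Set U).Pairwise fun u v => dist u v ≤ dist x₁ x₂ :=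
  pairwise_dist_triple (P := (· ≤ dist x₁ x₂)) le_rfl
    (by linarith [dist_comm x x₁, dist_nonneg (x := x) (y := x₂)])
    (by linarith [dist_comm x x₂, dist_nonneg (x := x) (y := x₁)])

theorem not_pairwise_lt_dist_of_dist_add_dist_eq {t : ℝ}
    (hx : dist x x₁ + dist x x₂ = dist x₁ x₂) (hx₁ : x ≠ x₁) (hx₂ : x ≠ x₂)
    (ht : dist x₁ x₂ / 2 ≤ t) :
    ¬(({x₁, x₂, x} : Finset U) : Set U).Pairwise fun u v => t < dist u v := by
  intro h
  have h₁ : t < dist x x₁ := h (by simp) (by simp) hx₁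
  have h₂ : t < dist x x₂ := h (by simp) (by simp) hx₂
  linarith

theorem pairwise_lt_dist_of_dist_eq_half {xstar : U} {t : ℝ}
    (hstar₁ : dist xstar x₁ = dist x₁ x₂ / 2) (hstar₂ : dist xstar x₂ = dist x₁ x₂ / 2)
    (ht : t < dist x₁ x₂ / 2) :
    (({x₁, x₂, xstar} : Finset U) : Set U).Pairwise fun u v => t < dist u v :=
  pairwise_dist_triple (P := (t < ·)) (by linarith [dist_nonneg (x := x₁) (y := x₂)])
    (by rwa [dist_comm, hstar₁]) (by rwa [dist_comm, hstar₂])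

theorem card_eq_three_of_dist_eq_half {xstar : U} (hpos : 0 < dist x₁ x₂)
    (hstar₁ : dist xstar x₁ = dist x₁ x₂ / 2) (hstar₂ : dist xstar x₂ = dist x₁ x₂ / 2) :
    ({x₁, x₂, xstar} : Finset U).card = 3 :=
  Finset.card_eq_three.2 ⟨x₁, x₂, xstar, dist_pos.1 hpos,
    fun h => by rw [← h, dist_self] at hstar₁; linarith,
    fun h => by rw [← h, dist_self] at hstar₂; linarith, rfl⟩

end Betweenness

theorem nCircles_dissimilarity_general {U : Type*} [MetricSpace U] [DecidableEq U]
    (t : ℝ) (x₁ x₂ x xstar : U) (ha : 0 < dist x₁ x₂)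
    (hx : dist x x₁ + dist x x₂ = dist x₁ x₂) (hx1 : x ≠ x₁) (hx2 : x ≠ x₂)
    (hstar1 : dist xstar x₁ = dist x₁ x₂ / 2) (hstar2 : dist xstar x₂ = dist x₁ x₂ / 2) :
    nCircles t ({x₁, x₂, x} : Finset U) ≤ nCircles t ({x₁, x₂, xstar} : Finset U) := by
  rcases lt_or_ge t (dist x₁ x₂ / 2) with ht | ht
  · calc nCircles t {x₁, x₂, x} ≤ 3 := nCircles_le_card.trans Finset.card_le_three
      _ = ({x₁, x₂, xstar} : Finset U).card := (card_eq_three_of_dist_eq_half ha hstar1 hstar2).symm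
      _ ≤ _ := le_nCircles subset_rfl (pairwise_lt_dist_of_dist_eq_half hstar1 hstar2 ht)
  rcases lt_or_ge t (dist x₁ x₂) with ht' | ht'
  · have hlt : nCircles t {x₁, x₂, x} < 3 :=
      (nCircles_lt_card (not_pairwise_lt_dist_of_dist_add_dist_eq hx hx1 hx2 ht)).trans_le
        Finset.card_le_three
    calc nCircles t {x₁, x₂, x} ≤ 2 := Nat.le_of_lt_succ hlt
      _ = ({x₁, x₂} : Finset U).card := (Finset.card_pair (dist_pos.1 ha)).symm
      _ ≤ _ := le_nCircles (Finset.insert_subset_insert _ (by simp))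
        (by rw [Finset.coe_pair]; exact Set.pairwise_pair.2 fun _ => ⟨ht', by rwa [dist_comm]⟩)
  · calc nCircles t {x₁, x₂, x} ≤ 1 := nCircles_le_one
          ((pairwise_dist_le_of_dist_add_dist_eq hx).mono' fun _ _ h => h.trans ht')
      _ = ({x₁} : Finset U).card := (Finset.card_singleton x₁).symm
      _ ≤ _ := le_nCircles (by simp) (by simp)

theorem nCircles_dissimilarity {U : Type*} [MetricSpace U] [DecidableEq U]
    (t : ℝ) (ht : 0 ≤ t) (x₁ x₂ x xstar : U) (ha : 0 < dist x₁ x₂)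
    (hx : dist x x₁ + dist x x₂ = dist x₁ x₂) (hx1 : x ≠ x₁) (hx2 : x ≠ x₂)
    (hstar1 : dist xstar x₁ = dist x₁ x₂ / 2) (hstar2 : dist xstar x₂ = dist x₁ x₂ / 2) :
    nCircles t ({x₁, x₂, x} : Finset U) ≤ nCircles t ({x₁, x₂, xstar} : Finset U) :=
  nCircles_dissimilarity_general t x₁ x₂ x xstar ha hx hx1 hx2 hstar1 hstar2
end

section
/- The Tanimoto (Jaccard) distance on nonzero binary vectors, defined as d(x,y) = 1 − (Σⱼ min(xⱼ,yⱼ))/(Σⱼ max(xⱼ,yⱼ)), satisfies the triangle inequality: for all nonzero x, y, z ∈ {0,1}ⁿ, d(x,z) ≤ d(x,y) + d(y,z). -/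
/-- Tanimoto (Jaccard) distance on binary vectors:
`d(x,y) = 1 − (Σⱼ min(xⱼ,yⱼ)) / (Σⱼ max(xⱼ,yⱼ))`. -/
noncomputable def tanimotoDist {n : ℕ} (x y : Fin n → ℝ) : ℝ :=
  1 - (∑ j, min (x j) (y j)) / (∑ j, max (x j) (y j))

set_option maxRecDepth 8000 in
/-- Core algebraic inequality for the Jaccard triangle inequality, stated in terms of
the seven Venn-region cardinalities. -/
lemma jaccard_core (a b c d e f g : ℝ) (ha : 0 ≤ a) (hb : 0 ≤ b) (hc : 0 ≤ c)
    (hd : 0 ≤ d) (he : 0 ≤ e) (hf : 0 ≤ f) (hg : 0 ≤ g)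
    (hUAC : 0 < a+c+d+e+f+g) (hUAB : 0 < a+b+d+e+f+g) (hUBC : 0 < b+c+d+e+f+g) :
    1 - (e+g)/(a+c+d+e+f+g) ≤
      (1 - (d+g)/(a+b+d+e+f+g)) + (1 - (f+g)/(b+c+d+e+f+g)) := by
  have h1 : 1 - (e+g)/(a+c+d+e+f+g) = (a+c+d+f)/(a+c+d+e+f+g) := by
    field_simp <;> ring
  have h2 : 1 - (d+g)/(a+b+d+e+f+g) = (a+b+e+f)/(a+b+d+e+f+g) := by
    field_simp <;> ring
  have h3 : 1 - (f+g)/(b+c+d+e+f+g) = (b+c+d+e)/(b+c+d+e+f+g) := by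
    field_simp <;> ring
  rw [h1, h2, h3, div_add_div _ _ hUAB.ne' hUBC.ne',
    div_le_div_iff₀ hUAC (mul_pos hUAB hUBC)]
  have key : ((a+b+e+f)*(b+c+d+e+f+g) + (b+c+d+e)*(a+b+d+e+f+g))*(a+c+d+e+f+g)
      - (a+c+d+f)*((a+b+d+e+f+g)*(b+c+d+e+f+g)) =
      2*e*g*g + 4*e*f*g + 2*e*f*f + 4*e*e*g + 4*e*e*f + 2*e*e*e + 4*d*e*g + 4*d*e*f
      + 4*d*e*e + 2*d*d*e + c*f*g + c*f*f + 3*c*e*g + 4*c*e*f + 3*c*e*e + c*d*f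
      + 3*c*d*e + c*c*f + c*c*e + 2*b*g*g + 3*b*f*g + b*f*f + 6*b*e*g + 5*b*e*f
      + 4*b*e*e + 3*b*d*g + 2*b*d*f + 5*b*d*e + b*d*d + 2*b*c*g + 2*b*c*f + 4*b*c*e
      + 2*b*c*d + b*c*c + 2*b*b*g + b*b*f + 2*b*b*e + b*b*d + b*b*c + 3*a*e*g
      + 3*a*e*f + 3*a*e*e + a*d*g + a*d*f + 4*a*d*e + a*d*d + 2*a*c*g + 2*a*c*f
      + 4*a*c*e + 2*a*c*d + a*c*c + 2*a*b*g + 2*a*b*f + 4*a*b*e + 2*a*b*d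
      + 2*a*b*c + a*b*b + a*a*e + a*a*d + a*a*c + a*a*b := by ring
  linarith [key, mul_nonneg (mul_nonneg he hg) hg, mul_nonneg (mul_nonneg he hf) hg,
    mul_nonneg (mul_nonneg he hf) hf, mul_nonneg (mul_nonneg he he) hg,
    mul_nonneg (mul_nonneg he he) hf, mul_nonneg (mul_nonneg he he) he,
    mul_nonneg (mul_nonneg hd he) hg, mul_nonneg (mul_nonneg hd he) hf,
    mul_nonneg (mul_nonneg hd he) he, mul_nonneg (mul_nonneg hd hd) he,
    mul_nonneg (mul_nonneg hc hf) hg, mul_nonneg (mul_nonneg hc hf) hf,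
    mul_nonneg (mul_nonneg hc he) hg, mul_nonneg (mul_nonneg hc he) hf,
    mul_nonneg (mul_nonneg hc he) he, mul_nonneg (mul_nonneg hc hd) hf,
    mul_nonneg (mul_nonneg hc hd) he, mul_nonneg (mul_nonneg hc hc) hf,
    mul_nonneg (mul_nonneg hc hc) he, mul_nonneg (mul_nonneg hb hg) hg,
    mul_nonneg (mul_nonneg hb hf) hg, mul_nonneg (mul_nonneg hb hf) hf,
    mul_nonneg (mul_nonneg hb he) hg, mul_nonneg (mul_nonneg hb he) hf,
    mul_nonneg (mul_nonneg hb he) he, mul_nonneg (mul_nonneg hb hd) hg,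
    mul_nonneg (mul_nonneg hb hd) hf, mul_nonneg (mul_nonneg hb hd) he,
    mul_nonneg (mul_nonneg hb hd) hd, mul_nonneg (mul_nonneg hb hc) hg,
    mul_nonneg (mul_nonneg hb hc) hf, mul_nonneg (mul_nonneg hb hc) he,
    mul_nonneg (mul_nonneg hb hc) hd, mul_nonneg (mul_nonneg hb hc) hc,
    mul_nonneg (mul_nonneg hb hb) hg, mul_nonneg (mul_nonneg hb hb) hf,
    mul_nonneg (mul_nonneg hb hb) he, mul_nonneg (mul_nonneg hb hb) hd,
    mul_nonneg (mul_nonneg hb hb) hc, mul_nonneg (mul_nonneg ha he) hg,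
    mul_nonneg (mul_nonneg ha he) hf, mul_nonneg (mul_nonneg ha he) he,
    mul_nonneg (mul_nonneg ha hd) hg, mul_nonneg (mul_nonneg ha hd) hf,
    mul_nonneg (mul_nonneg ha hd) he, mul_nonneg (mul_nonneg ha hd) hd,
    mul_nonneg (mul_nonneg ha hc) hg, mul_nonneg (mul_nonneg ha hc) hf,
    mul_nonneg (mul_nonneg ha hc) he, mul_nonneg (mul_nonneg ha hc) hd,
    mul_nonneg (mul_nonneg ha hc) hc, mul_nonneg (mul_nonneg ha hb) hg,
    mul_nonneg (mul_nonneg ha hb) hf, mul_nonneg (mul_nonneg ha hb) he,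
    mul_nonneg (mul_nonneg ha hb) hd, mul_nonneg (mul_nonneg ha hb) hc,
    mul_nonneg (mul_nonneg ha hb) hb, mul_nonneg (mul_nonneg ha ha) he,
    mul_nonneg (mul_nonneg ha ha) hd, mul_nonneg (mul_nonneg ha ha) hc,
    mul_nonneg (mul_nonneg ha ha) hb]

theorem tanimoto_triangle {n : ℕ} (x y z : Fin n → ℝ)
    (hx : ∀ j, x j = 0 ∨ x j = 1) (hy : ∀ j, y j = 0 ∨ y j = 1)
    (hz : ∀ j, z j = 0 ∨ z j = 1)
    (hx0 : x ≠ 0) (hy0 : y ≠ 0) (hz0 : z ≠ 0) :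
    tanimotoDist x z ≤ tanimotoDist x y + tanimotoDist y z := by
  -- the seven Venn regions
  set a : ℝ := ∑ j, x j * (1 - y j) * (1 - z j) with hA
  set b : ℝ := ∑ j, (1 - x j) * y j * (1 - z j) with hB
  set c : ℝ := ∑ j, (1 - x j) * (1 - y j) * z j with hC
  set d : ℝ := ∑ j, x j * y j * (1 - z j) with hD
  set e : ℝ := ∑ j, x j * (1 - y j) * z j with hE
  set f : ℝ := ∑ j, (1 - x j) * y j * z j with hF
  set g : ℝ := ∑ j, x j * y j * z j with hG
  have hx01 : ∀ j, 0 ≤ x j ∧ x j ≤ 1 := fun j => by rcases hx j with h | h <;> simp [h]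
  have hy01 : ∀ j, 0 ≤ y j ∧ y j ≤ 1 := fun j => by rcases hy j with h | h <;> simp [h]
  have hz01 : ∀ j, 0 ≤ z j ∧ z j ≤ 1 := fun j => by rcases hz j with h | h <;> simp [h]
  have ha : 0 ≤ a := Finset.sum_nonneg fun j _ =>
    mul_nonneg (mul_nonneg (hx01 j).1 (sub_nonneg.mpr (hy01 j).2)) (sub_nonneg.mpr (hz01 j).2)
  have hb : 0 ≤ b := Finset.sum_nonneg fun j _ =>
    mul_nonneg (mul_nonneg (sub_nonneg.mpr (hx01 j).2) (hy01 j).1) (sub_nonneg.mpr (hz01 j).2)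
  have hc : 0 ≤ c := Finset.sum_nonneg fun j _ =>
    mul_nonneg (mul_nonneg (sub_nonneg.mpr (hx01 j).2) (sub_nonneg.mpr (hy01 j).2)) (hz01 j).1
  have hd : 0 ≤ d := Finset.sum_nonneg fun j _ =>
    mul_nonneg (mul_nonneg (hx01 j).1 (hy01 j).1) (sub_nonneg.mpr (hz01 j).2)
  have he : 0 ≤ e := Finset.sum_nonneg fun j _ =>
    mul_nonneg (mul_nonneg (hx01 j).1 (sub_nonneg.mpr (hy01 j).2)) (hz01 j).1
  have hf : 0 ≤ f := Finset.sum_nonneg fun j _ =>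
    mul_nonneg (mul_nonneg (sub_nonneg.mpr (hx01 j).2) (hy01 j).1) (hz01 j).1
  have hg : 0 ≤ g := Finset.sum_nonneg fun j _ =>
    mul_nonneg (mul_nonneg (hx01 j).1 (hy01 j).1) (hz01 j).1
  -- pointwise identities for min and max on {0,1} values
  have minxz : ∑ j, min (x j) (z j) = e + g := by
    rw [hE, hG, ← Finset.sum_add_distrib]
    refine Finset.sum_congr rfl fun j _ => ?_
    rcases hx j with h | h <;> rcases hy j with h' | h' <;> rcases hz j with h'' | h'' <;>
      simp [h, h', h'']
  have minxy : ∑ j, min (x j) (y j) = d + g := by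
    rw [hD, hG, ← Finset.sum_add_distrib]
    refine Finset.sum_congr rfl fun j _ => ?_
    rcases hx j with h | h <;> rcases hy j with h' | h' <;> rcases hz j with h'' | h'' <;>
      simp [h, h', h'']
  have minyz : ∑ j, min (y j) (z j) = f + g := by
    rw [hF, hG, ← Finset.sum_add_distrib]
    refine Finset.sum_congr rfl fun j _ => ?_
    rcases hx j with h | h <;> rcases hy j with h' | h' <;> rcases hz j with h'' | h'' <;>
      simp [h, h', h'']
  have maxxz : ∑ j, max (x j) (z j) = a+c+d+e+f+g := by
    rw [hA, hC, hD, hE, hF, hG, ← Finset.sum_add_distrib, ← Finset.sum_add_distrib,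
      ← Finset.sum_add_distrib, ← Finset.sum_add_distrib, ← Finset.sum_add_distrib]
    refine Finset.sum_congr rfl fun j _ => ?_
    rcases hx j with h | h <;> rcases hy j with h' | h' <;> rcases hz j with h'' | h'' <;>
      simp [h, h', h'']
  have maxxy : ∑ j, max (x j) (y j) = a+b+d+e+f+g := by
    rw [hA, hB, hD, hE, hF, hG, ← Finset.sum_add_distrib, ← Finset.sum_add_distrib,
      ← Finset.sum_add_distrib, ← Finset.sum_add_distrib, ← Finset.sum_add_distrib]
    refine Finset.sum_congr rfl fun j _ => ?_
    rcases hx j with h | h <;> rcases hy j with h' | h' <;> rcases hz j with h'' | h'' <;>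
      simp [h, h', h'']
  have maxyz : ∑ j, max (y j) (z j) = b+c+d+e+f+g := by
    rw [hB, hC, hD, hE, hF, hG, ← Finset.sum_add_distrib, ← Finset.sum_add_distrib,
      ← Finset.sum_add_distrib, ← Finset.sum_add_distrib, ← Finset.sum_add_distrib]
    refine Finset.sum_congr rfl fun j _ => ?_
    rcases hx j with h | h <;> rcases hy j with h' | h' <;> rcases hz j with h'' | h'' <;>
      simp [h, h', h'']
  -- positivity of the unions
  obtain ⟨jx, hjx⟩ := Function.ne_iff.mp hx0
  obtain ⟨jy, hjy⟩ := Function.ne_iff.mp hy0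
  have hjx1 : x jx = 1 := (hx jx).resolve_left (by simpa using hjx)
  have hjy1 : y jy = 1 := (hy jy).resolve_left (by simpa using hjy)
  have hUAC : 0 < ∑ j, max (x j) (z j) :=
    Finset.sum_pos' (fun i _ => le_max_of_le_left (hx01 i).1)
      ⟨jx, Finset.mem_univ jx, lt_max_of_lt_left (by rw [hjx1]; norm_num)⟩
  have hUAB : 0 < ∑ j, max (x j) (y j) :=
    Finset.sum_pos' (fun i _ => le_max_of_le_left (hx01 i).1)
      ⟨jx, Finset.mem_univ jx, lt_max_of_lt_left (by rw [hjx1]; norm_num)⟩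
  have hUBC : 0 < ∑ j, max (y j) (z j) :=
    Finset.sum_pos' (fun i _ => le_max_of_le_left (hy01 i).1)
      ⟨jy, Finset.mem_univ jy, lt_max_of_lt_left (by rw [hjy1]; norm_num)⟩
  rw [maxxz] at hUAC; rw [maxxy] at hUAB; rw [maxyz] at hUBC
  unfold tanimotoDist
  rw [minxz, minxy, minyz, maxxz, maxxy, maxyz]
  exact jaccard_core a b c d e f g ha hb hc hd he hf hg hUAC hUAB hUBC
end
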